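/- Define elements E_0, E_1, …, E_N of f recursively by E_0 = θ_j and, for 1 ≤ m ≤ N, E_m = θ_j θ_i^{(m)} − Σ_{k=0}^{m−1} v^{(k−N)(m−k)} θ_i^{(m−k)} E_k. Then for every integer m with 0 ≤ m ≤ N one has E_m = Σ_{p=0}^{m} (−1)^p v^{−p(1+N−m)} θ_i^{(p)} θ_j θ_i^{(m−p)} = f(i,j;m). -/

import Mathlib

noncomputable section

open Finset

/-- The base field `K = ℚ(v)`. -/
abbrev K : Type := RatFunc ℚ

/-- The variable `v`. -/
def v : K := RatFunc.X

/-- The balanced quantum integer `[n]_v = (v^n - v^{-n})/(v - v^{-1})`. -/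
def qnum (n : ℕ) : K := (v ^ (n : ℤ) - v ^ (-(n : ℤ))) / (v - v⁻¹)

/-- The quantum factorial `[n]_v!`. -/
def qfac : ℕ → K
  | 0 => 1
  | n + 1 => qfac n * qnum (n + 1)

/-- Divided power `x^{(n)} = x^n/[n]_v!` in the free algebra. -/
def fdp (x : FreeAlgebra K (Fin 2)) (n : ℕ) : FreeAlgebra K (Fin 2) :=
  (qfac n)⁻¹ • x ^ n

/-- The generator `θ_i` in the free algebra. -/
def θi' : FreeAlgebra K (Fin 2) := FreeAlgebra.ι K 0

/-- The generator `θ_j` in the free algebra. -/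
def θj' : FreeAlgebra K (Fin 2) := FreeAlgebra.ι K 1

/-- The two quantum Serre relations defining Lusztig's algebra `f` for the quiver with
two vertices `i, j` and `N` arrows from `j` to `i` (so `a_{ij} = a_{ji} = -N`). -/
inductive SerreRel (N : ℕ) : FreeAlgebra K (Fin 2) → FreeAlgebra K (Fin 2) → Prop
  | serre_i : SerreRel N
      (∑ k ∈ range (N + 2), ((-1 : K) ^ k) • (fdp θi' k * θj' * fdp θi' (N + 1 - k))) 0
  | serre_j : SerreRel N
      (∑ k ∈ range (N + 2), ((-1 : K) ^ k) • (fdp θj' k * θi' * fdp θj' (N + 1 - k))) 0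

/-- Lusztig's algebra `f`. -/
def LusztigF (N : ℕ) : Type := RingQuot (SerreRel N)

instance (N : ℕ) : Ring (LusztigF N) := inferInstanceAs (Ring (RingQuot (SerreRel N)))
instance (N : ℕ) : Algebra K (LusztigF N) := inferInstanceAs (Algebra K (RingQuot (SerreRel N)))

/-- The generator `θ_i` of `f`. -/
def θi (N : ℕ) : LusztigF N := RingQuot.mkAlgHom K (SerreRel N) θi'

/-- The generator `θ_j` of `f`. -/
def θj (N : ℕ) : LusztigF N := RingQuot.mkAlgHom K (SerreRel N) θj'

/-- Divided power `x^{(n)} = x^n/[n]_v!` in `f`. -/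
def dp {N : ℕ} (x : LusztigF N) (n : ℕ) : LusztigF N := (qfac n)⁻¹ • x ^ n

/-- The element `f(i,j;m) = Σ_{r+s=m} (-1)^r v^{-r(N-m+1)} θ_i^{(r)} θ_j θ_i^{(s)}`. -/
def fm (N m : ℕ) : LusztigF N :=
  ∑ r ∈ range (m + 1),
    ((-1 : K) ^ r * v ^ (-(r : ℤ) * ((N : ℤ) - (m : ℤ) + 1))) •
      (dp (θi N) r * θj N * dp (θi N) (m - r))

/-!
Expanding `f(i,j;k)` and merging `θ_i^{(a)} θ_i^{(r)} = [a+r, r]_v θ_i^{(a+r)}`, the sum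
`Σ_k v^{(k-N)(m-k)} θ_i^{(m-k)} f(i,j;k)` collects, in front of `θ_i^{(P)} θ_j θ_i^{(m-P)}`, the
coefficient `v^{(m-P-N)P} Σ_{a+r=P} (-1)^r v^{r(P-1)} [a+r, r]_v`. This alternating sum of
`v`-binomials vanishes for `P > 0`, so only `θ_j θ_i^{(m)}` survives: the elements `f(i,j;k)`
satisfy the recursion defining `E_k`, and induction on `m` gives `E_m = f(i,j;m)`.
-/

lemma v_ne_zero : v ≠ 0 := RatFunc.X_ne_zero

lemma v_pow_ne_one {n : ℕ} (hn : n ≠ 0) : v ^ n ≠ 1 := fun h =>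
  (RatFunc.transcendental_X (K := ℚ)) ⟨Polynomial.X ^ n - 1,
    Polynomial.X_pow_sub_C_ne_zero (Nat.pos_of_ne_zero hn) 1, by simpa [v, sub_eq_zero] using h⟩

lemma v_zpow_sub_v_zpow_neg_ne_zero {n : ℕ} (hn : n ≠ 0) : v ^ (n : ℤ) - v ^ (-(n : ℤ)) ≠ 0 := by
  rw [sub_ne_zero]
  intro h
  apply v_pow_ne_one (n := 2 * n) (by omega)
  rw [← zpow_natCast, Nat.cast_mul, Nat.cast_ofNat, two_mul, zpow_add₀ v_ne_zero]
  nth_rewrite 1 [h]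
  rw [← zpow_add₀ v_ne_zero, neg_add_cancel, zpow_zero]

lemma qnum_ne_zero {n : ℕ} (hn : n ≠ 0) : qnum n ≠ 0 :=
  div_ne_zero (v_zpow_sub_v_zpow_neg_ne_zero hn)
    (by simpa using v_zpow_sub_v_zpow_neg_ne_zero one_ne_zero)

lemma qfac_ne_zero (n : ℕ) : qfac n ≠ 0 := by
  induction n with
  | zero => exact one_ne_zero
  | succ n ih => exact mul_ne_zero ih (qnum_ne_zero n.succ_ne_zero)

lemma qnum_zero : qnum 0 = 0 := by simp [qnum]

lemma qnum_add (a b : ℕ) : qnum (a + b) = v ^ (a : ℤ) * qnum b + v ^ (-(b : ℤ)) * qnum a := by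
  simp only [qnum, mul_div_assoc', ← add_div, mul_sub, ← zpow_add₀ v_ne_zero]
  push_cast
  ring_nf

def qbinom (a b : ℕ) : K := qfac (a + b) / (qfac a * qfac b)

/-- Split `[n+1]_v = v^r [a]_v + v^{-a} [r]_v`: the two resulting sums over the antidiagonal of `n`
cancel term by term. -/
lemma sum_antidiagonal_qbinom_eq_zero (n : ℕ) :
    ∑ p ∈ antidiagonal (n + 1), (-1 : K) ^ p.2 * v ^ ((p.2 : ℤ) * n) * qbinom p.1 p.2 = 0 := by
  set c : ℕ × ℕ → K := fun p => qfac n / (qfac p.1 * qfac p.2)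
  have split : ∀ p ∈ antidiagonal (n + 1),
      (-1 : K) ^ p.2 * v ^ ((p.2 : ℤ) * n) * qbinom p.1 p.2 =
        (-1 : K) ^ p.2 * v ^ ((p.2 : ℤ) * (n + 1)) * qnum p.1 * c p +
        (-1 : K) ^ p.2 * v ^ ((p.2 : ℤ) * n - p.1) * qnum p.2 * c p := by
    rintro ⟨a, r⟩ h
    rw [HasAntidiagonal.mem_antidiagonal] at h
    simp only [c, qbinom, h, qfac]
    rw [← h, add_comm a, qnum_add, mul_add (r : ℤ), sub_eq_add_neg, zpow_add₀ v_ne_zero,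
      zpow_add₀ v_ne_zero, mul_one]
    ring
  rw [sum_congr rfl split, sum_add_distrib, Nat.sum_antidiagonal_succ,
    Nat.sum_antidiagonal_succ', qnum_zero]
  simp only [mul_zero, zero_mul, zero_add, ← sum_add_distrib]
  refine sum_eq_zero fun ⟨a, r⟩ h => ?_
  rw [HasAntidiagonal.mem_antidiagonal] at h
  have hn : ((r + 1 : ℕ) : ℤ) * n - a = r * (n + 1) := by rw [← h]; push_cast; ring
  simp only [c, hn, qfac, pow_succ]
  field_simp [qfac_ne_zero, qnum_ne_zero (Nat.succ_ne_zero _)]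
  ring

lemma Finset.Nat.sum_antidiagonal_sum_antidiagonal_snd {M : Type*} [AddCommMonoid M]
    (f : ℕ → ℕ → ℕ → M) (n : ℕ) :
    ∑ p ∈ antidiagonal n, ∑ q ∈ antidiagonal p.2, f p.1 q.1 q.2 =
      ∑ p ∈ antidiagonal n, ∑ q ∈ antidiagonal p.1, f q.1 q.2 p.2 := by
  rw [sum_sigma', sum_sigma']
  refine sum_nbij' (fun x => ⟨(x.1.1 + x.2.1, x.2.2), (x.1.1, x.2.1)⟩)
    (fun x => ⟨(x.2.1, x.2.2 + x.1.2), (x.2.2, x.1.2)⟩) ?_ ?_ ?_ ?_ (fun _ _ => rfl) <;>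
  · rintro ⟨⟨a, b⟩, ⟨c, d⟩⟩ h
    simp only [mem_sigma, HasAntidiagonal.mem_antidiagonal, Sigma.mk.injEq, Prod.mk.injEq,
      heq_eq_eq, and_true, true_and] at h ⊢
    omega

section

variable {A : Type*} [Ring A] [Algebra K A]

def divPow (x : A) (n : ℕ) : A := (qfac n)⁻¹ • x ^ n

lemma divPow_zero (x : A) : divPow x 0 = 1 := by simp [divPow, qfac]

lemma divPow_mul_divPow (x : A) (a b : ℕ) :
    divPow x a * divPow x b = qbinom a b • divPow x (a + b) := by
  rw [divPow, divPow, divPow, smul_mul_smul, ← pow_add, smul_smul, qbinom]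
  congr 1
  field_simp [qfac_ne_zero]

def serreElt (x y : A) (N : ℤ) (m : ℕ) : A :=
  ∑ p ∈ range (m + 1),
    ((-1 : K) ^ p * v ^ (-(p : ℤ) * (1 + N - (m : ℤ)))) • (divPow x p * y * divPow x (m - p))

lemma serreElt_eq_sum_antidiagonal (x y : A) (N : ℤ) (m : ℕ) :
    serreElt x y N m = ∑ q ∈ antidiagonal m,
      ((-1 : K) ^ q.1 * v ^ (-(q.1 : ℤ) * (1 + N - (m : ℤ)))) • (divPow x q.1 * y * divPow x q.2) :=
  (Nat.sum_antidiagonal_eq_sum_range_succ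
    (fun r s => ((-1 : K) ^ r * v ^ (-(r : ℤ) * (1 + N - (m : ℤ)))) • (divPow x r * y * divPow x s))
    m).symm

lemma sum_antidiagonal_divPow_mul_serreElt (x y : A) (N : ℤ) (m : ℕ) :
    ∑ p ∈ antidiagonal m, v ^ (((p.2 : ℤ) - N) * p.1) • (divPow x p.1 * serreElt x y N p.2) =
      y * divPow x m := by
  set g : ℕ → ℕ → ℕ → K := fun a r s =>
    v ^ ((((r + s : ℕ) : ℤ) - N) * a) *
      ((-1 : K) ^ r * v ^ (-(r : ℤ) * (1 + N - ((r + s : ℕ) : ℤ)))) * qbinom a r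
  calc ∑ p ∈ antidiagonal m, v ^ (((p.2 : ℤ) - N) * p.1) • (divPow x p.1 * serreElt x y N p.2)
      = ∑ p ∈ antidiagonal m, ∑ q ∈ antidiagonal p.2,
          g p.1 q.1 q.2 • (divPow x (p.1 + q.1) * y * divPow x q.2) := by
        refine sum_congr rfl fun ⟨a, k⟩ _ => ?_
        rw [serreElt_eq_sum_antidiagonal, mul_sum, smul_sum]
        refine sum_congr rfl fun ⟨r, s⟩ hq => ?_
        rw [HasAntidiagonal.mem_antidiagonal] at hq
        subst hq
        rw [mul_smul_comm, ← mul_assoc, ← mul_assoc, divPow_mul_divPow, smul_mul_assoc,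
          smul_mul_assoc, smul_smul, smul_smul]
    _ = ∑ p ∈ antidiagonal m, ∑ q ∈ antidiagonal p.1,
          g q.1 q.2 p.2 • (divPow x (q.1 + q.2) * y * divPow x p.2) :=
        Nat.sum_antidiagonal_sum_antidiagonal_snd
          (fun a r s => g a r s • (divPow x (a + r) * y * divPow x s)) m
    _ = ∑ p ∈ antidiagonal m, (v ^ (((p.2 : ℤ) - N) * p.1) *
          ∑ q ∈ antidiagonal p.1, (-1 : K) ^ q.2 * v ^ ((q.2 : ℤ) * ((p.1 : ℤ) - 1)) *
            qbinom q.1 q.2) • (divPow x p.1 * y * divPow x p.2) := by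
        refine sum_congr rfl fun ⟨P, s⟩ _ => ?_
        rw [mul_sum, sum_smul]
        refine sum_congr rfl fun ⟨a, r⟩ hq => ?_
        rw [HasAntidiagonal.mem_antidiagonal] at hq
        subst hq
        have hexp : (((r + s : ℕ) : ℤ) - N) * a + -(r : ℤ) * (1 + N - ((r + s : ℕ) : ℤ)) =
            ((s : ℤ) - N) * ((a + r : ℕ) : ℤ) + r * (((a + r : ℕ) : ℤ) - 1) := by
          push_cast; ring
        have hpow := congrArg (v ^ ·) hexp
        simp only [zpow_add₀ v_ne_zero] at hpow
        congr 1
        linear_combination ((-1 : K) ^ r * qbinom a r) * hpow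
    _ = y * divPow x m := by
        rw [sum_eq_single_of_mem (0, m) (by simp)]
        · simp [divPow_zero, qbinom, qfac]
        · rintro ⟨_ | P, s⟩ hp hne
          · simp_all
          · rw [Nat.cast_succ, add_sub_cancel_right, sum_antidiagonal_qbinom_eq_zero, mul_zero,
              zero_smul]

lemma sum_range_divPow_mul_serreElt (x y : A) (N : ℤ) (m : ℕ) :
    ∑ k ∈ range (m + 1),
        v ^ (((k : ℤ) - N) * ((m : ℤ) - k)) • (divPow x (m - k) * serreElt x y N k) =
      y * divPow x m := by
  rw [← sum_antidiagonal_divPow_mul_serreElt x y N, ← Nat.sum_antidiagonal_swap,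
    Nat.sum_antidiagonal_eq_sum_range_succ_mk]
  refine sum_congr rfl fun k hk => ?_
  simp [Nat.cast_sub (mem_range_succ_iff.mp hk)]

lemma eq_serreElt_of_recursion (x y : A) (N : ℕ) (E : ℕ → A) (h0 : E 0 = y)
    (hrec : ∀ m : ℕ, 1 ≤ m → m ≤ N →
      E m = y * divPow x m -
        ∑ k ∈ range m, v ^ (((k : ℤ) - N) * ((m : ℤ) - k)) • (divPow x (m - k) * E k))
    {m : ℕ} (hm : m ≤ N) : E m = serreElt x y N m := by
  induction m using Nat.strong_induction_on with
  | _ m ih =>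
    rcases Nat.eq_zero_or_pos m with rfl | hpos
    · simp [h0, serreElt, divPow_zero]
    · have hE : ∀ k ∈ range m, v ^ (((k : ℤ) - N) * ((m : ℤ) - k)) • (divPow x (m - k) * E k) =
          v ^ (((k : ℤ) - N) * ((m : ℤ) - k)) • (divPow x (m - k) * serreElt x y N k) :=
        fun k hk => by rw [ih k (mem_range.mp hk) ((mem_range.mp hk).le.trans hm)]
      rw [hrec m hpos hm, sum_congr rfl hE, ← sum_range_divPow_mul_serreElt x y N m,
        sum_range_succ]
      simp [divPow_zero]

end

lemma serreElt_eq_fm (N m : ℕ) : serreElt (θi N) (θj N) N m = fm N m :=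
  sum_congr rfl fun p _ => by rw [show 1 + (N : ℤ) - m = N - m + 1 by ring]; rfl

/-- Define `E_0, …, E_N` recursively by `E_0 = θ_j` and, for `1 ≤ m ≤ N`,
`E_m = θ_j θ_i^{(m)} - Σ_{k=0}^{m-1} v^{(k-N)(m-k)} θ_i^{(m-k)} E_k`.
Then for every `0 ≤ m ≤ N`,
`E_m = Σ_{p=0}^{m} (-1)^p v^{-p(1+N-m)} θ_i^{(p)} θ_j θ_i^{(m-p)} = f(i,j;m)`. -/
theorem stmt1 (N : ℕ) (E : ℕ → LusztigF N)
    (h0 : E 0 = θj N)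
    (hrec : ∀ m : ℕ, 1 ≤ m → m ≤ N →
      E m = θj N * dp (θi N) m -
        ∑ k ∈ range m,
          v ^ (((k : ℤ) - (N : ℤ)) * ((m : ℤ) - (k : ℤ))) • (dp (θi N) (m - k) * E k))
    (m : ℕ) (hm : m ≤ N) :
    E m =
      ∑ p ∈ range (m + 1),
        ((-1 : K) ^ p * v ^ (-(p : ℤ) * (1 + (N : ℤ) - (m : ℤ)))) •
          (dp (θi N) p * θj N * dp (θi N) (m - p)) ∧
    E m = fm N m := by
  have hE : E m = serreElt (θi N) (θj N) N m := eq_serreElt_of_recursion _ _ N E h0 hrec hm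
  exact ⟨hE, hE.trans (serreElt_eq_fm N m)⟩
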